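/- Let a_k = (2k-n)^2 for k = 0,...,\ell where \ell = \lfloor (n-1)/2 \rfloor, and let (c_0,...,c_\ell) be the unique solution of the Vandermonde system \sum_{j=0}^\ell c_j a_k^j = a_k^{\ell+1} for all 0 \le k \le \ell. Then for all m \ge 1, E[S_n^{2m+2\ell+2}] = \sum_{j=0}^\ell c_j 2^{2j-2\ell-2} E[S_n^{2m+2j}], where S_n is the centered Binomial(n,1/2). -/

import Mathlib

/-- The `r`-th moment of the centered Binomial(n, 1/2) random variable. -/
noncomputable def centeredBinomHalfMoment (n r : ℕ) : ℝ :=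
  ∑ k ∈ Finset.range (n + 1),
    (n.choose k : ℝ) * (1 / 2) ^ n * ((k : ℝ) - n / 2) ^ r

/-!
The atoms `x = k - n/2` of `S_n` come in pairs `±x`, so `x²` takes only the `ℓ + 1` values
`a_k / 4`, `k ≤ ℓ`, apart from `x = 0`. The Vandermonde system says that each of these values
is a root of `y^(ℓ+1) - ∑ c_j 4^(j-ℓ-1) y^j`; multiplying by `y^m` (which kills the atom `0`)
and integrating against the law of `S_n` gives the recursion between the moments.
-/

open Finset

lemma pow_add_eq_sum_of_ne_zero_imp {R : Type*} [CommSemiring R] {d : ℕ → R} {L m : ℕ}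
    (hm : m ≠ 0) {y : R} (hy : y ≠ 0 → ∑ j ∈ range L, d j * y ^ j = y ^ L) :
    y ^ (m + L) = ∑ j ∈ range L, d j * y ^ (m + j) := by
  by_cases h0 : y = 0
  · subst h0
    rw [zero_pow (by omega)]
    exact (sum_eq_zero fun j _ => by rw [zero_pow (by omega), mul_zero]).symm
  · simp only [pow_add, ← hy h0, mul_sum]
    exact sum_congr rfl fun j _ => by ring

lemma sum_mul_pow_add_eq_of_ne_zero_imp {R ι : Type*} [CommSemiring R] (s : Finset ι)
    (w y : ι → R) (d : ℕ → R) {L m : ℕ} (hm : m ≠ 0)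
    (hy : ∀ i ∈ s, y i ≠ 0 → ∑ j ∈ range L, d j * y i ^ j = y i ^ L) :
    ∑ i ∈ s, w i * y i ^ (m + L) = ∑ j ∈ range L, d j * ∑ i ∈ s, w i * y i ^ (m + j) := by
  simp only [mul_sum]
  rw [sum_comm]
  refine sum_congr rfl fun i hi => ?_
  rw [pow_add_eq_sum_of_ne_zero_imp hm (hy i hi), mul_sum]
  exact sum_congr rfl fun j _ => by ring

lemma sum_mul_zpow_sub_mul_pow_eq {K : Type*} [Field K] {t : K} (ht : t ≠ 0) {c : ℕ → K}
    {L : ℕ} {y : K} (h : ∑ j ∈ range L, c j * (t * y) ^ j = (t * y) ^ L) :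
    ∑ j ∈ range L, c j * t ^ ((j : ℤ) - L) * y ^ j = y ^ L := by
  refine mul_left_cancel₀ (pow_ne_zero L ht) ?_
  rw [← mul_pow, ← h, mul_sum]
  refine sum_congr rfl fun j _ => ?_
  have hzpow : t ^ L * t ^ ((j : ℤ) - L) = t ^ j := by
    rw [← zpow_natCast, ← zpow_add₀ ht, add_sub_cancel, zpow_natCast]
  linear_combination (c j * y ^ j) * hzpow - c j * (mul_pow t y j)

lemma exists_le_half_sq_eq {n k : ℕ} (hk : k ≤ n) (h2k : 2 * k ≠ n) :
    ∃ k' ≤ (n - 1) / 2, (2 * (k' : ℝ) - n) ^ 2 = (2 * (k : ℝ) - n) ^ 2 := by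
  rcases le_or_gt k ((n - 1) / 2) with h | h
  · exact ⟨k, h, rfl⟩
  · refine ⟨n - k, by omega, ?_⟩
    rw [Nat.cast_sub hk]
    ring

theorem stmt_15_general (n : ℕ) (ℓ : ℕ) (hℓ : ℓ = (n - 1) / 2)
    (a : ℕ → ℝ) (ha : ∀ k, a k = (2 * (k : ℝ) - n) ^ 2)
    (c : ℕ → ℝ)
    (hc : ∀ k ≤ ℓ, ∑ j ∈ Finset.range (ℓ + 1), c j * a k ^ j = a k ^ (ℓ + 1)) :
    ∀ m : ℕ, 1 ≤ m →
      centeredBinomHalfMoment n (2 * m + 2 * ℓ + 2) =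
        ∑ j ∈ Finset.range (ℓ + 1),
          c j * (2 : ℝ) ^ (2 * (j : ℤ) - 2 * ℓ - 2) *
            centeredBinomHalfMoment n (2 * m + 2 * j) := by
  intro m hm
  set w : ℕ → ℝ := fun k => (n.choose k : ℝ) * (1 / 2) ^ n
  set y : ℕ → ℝ := fun k => ((k : ℝ) - n / 2) ^ 2
  have hmoment (r : ℕ) :
      centeredBinomHalfMoment n (2 * r) = ∑ k ∈ range (n + 1), w k * y k ^ r := by
    simp only [centeredBinomHalfMoment, w, y, pow_mul]
  have hcoeff (j : ℕ) : (2 : ℝ) ^ (2 * (j : ℤ) - 2 * ℓ - 2) = 4 ^ ((j : ℤ) - (ℓ + 1 : ℕ)) := by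
    rw [show (4 : ℝ) = 2 ^ (2 : ℤ) by norm_num, ← zpow_mul]
    push_cast
    ring_nf
  have hroot : ∀ k ∈ range (n + 1), y k ≠ 0 →
      ∑ j ∈ range (ℓ + 1), c j * (2 : ℝ) ^ (2 * (j : ℤ) - 2 * ℓ - 2) * y k ^ j =
        y k ^ (ℓ + 1) := by
    intro k hk hyk
    have h2k : 2 * k ≠ n := by
      rintro rfl
      simp [y] at hyk
    obtain ⟨k', hk', hak'⟩ := exists_le_half_sq_eq (mem_range_succ_iff.mp hk) h2k
    have hay : a k' = 4 * y k := by rw [ha, hak']; ring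
    simp only [hcoeff]
    exact sum_mul_zpow_sub_mul_pow_eq four_ne_zero (hay ▸ hc k' (hℓ ▸ hk'))
  calc centeredBinomHalfMoment n (2 * m + 2 * ℓ + 2)
      = ∑ k ∈ range (n + 1), w k * y k ^ (m + (ℓ + 1)) := by rw [← hmoment, mul_add, mul_add, mul_one, add_assoc]
    _ = _ := sum_mul_pow_add_eq_of_ne_zero_imp _ w y _ (by omega) hroot
    _ = _ := by simp only [← mul_add, hmoment]

theorem stmt_15 (n : ℕ) (hn : 1 ≤ n) (ℓ : ℕ) (hℓ : ℓ = (n - 1) / 2)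
    (a : ℕ → ℝ) (ha : ∀ k, a k = (2 * (k : ℝ) - n) ^ 2)
    (c : ℕ → ℝ)
    (hc : ∀ k ≤ ℓ, ∑ j ∈ Finset.range (ℓ + 1), c j * a k ^ j = a k ^ (ℓ + 1)) :
    ∀ m : ℕ, 1 ≤ m →
      centeredBinomHalfMoment n (2 * m + 2 * ℓ + 2) =
        ∑ j ∈ Finset.range (ℓ + 1),
          c j * (2 : ℝ) ^ (2 * (j : ℤ) - 2 * ℓ - 2) *
            centeredBinomHalfMoment n (2 * m + 2 * j) :=
  stmt_15_general n ℓ hℓ a ha c hc
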